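/- In a flow graph, let P be a safe path ending at a vertex u that is not a sink, and let e* be an outgoing edge of u of maximum flow value. Then there exists an outgoing edge e of u such that the path P·e is safe if and only if the path P·e* is safe, which holds if and only if f_P − (f_out(u) − f(e*)) > 0. Symmetrically, if P is a safe path starting at a vertex x that is not a source and e* is an incoming edge of x of maximum flow value, then there exists an incoming edge e of x such that e·P is safe if and only if e*·P is safe, which holds if and only if f_P − (f_in(x) − f(e*)) > 0. -/

import Mathlib

/-- A flow graph: a finite DAG with at most one edge between any ordered pair of
vertices, where each edge carries a positive flow value, `f` is zero on non-edges,
and every vertex that is neither a source nor a sink satisfies flow conservation. -/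
structure FlowGraph (V : Type) [Fintype V] [DecidableEq V] where
  E : V → V → Prop
  f : V → V → ℚ
  f_pos : ∀ u v, E u v → 0 < f u v
  f_eq_zero : ∀ u v, ¬ E u v → f u v = 0
  acyclic : ∀ v : V, ¬ Relation.TransGen E v v
  conservation : ∀ v : V, (∃ u, E u v) → (∃ w, E v w) →
    (∑ u, f u v) = (∑ w, f v w)

namespace FlowGraph

variable {V : Type} [Fintype V] [DecidableEq V] (G : FlowGraph V)

/-- Total flow entering `v`. -/
def fin (v : V) : ℚ := ∑ u, G.f u v

/-- Total flow leaving `v`. -/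
def fout (v : V) : ℚ := ∑ w, G.f v w

/-- A source has no incoming edges. -/
def IsSource (v : V) : Prop := ∀ u, ¬ G.E u v

/-- A sink has no outgoing edges. -/
def IsSink (v : V) : Prop := ∀ w, ¬ G.E v w

/-- A path: a sequence of at least two vertices joined by edges. -/
def IsPath (p : List V) : Prop := 2 ≤ p.length ∧ p.Chain' G.E

/-- A path from a source of `G` to a sink of `G`. -/
def IsSourceSinkPath (p : List V) : Prop :=
  G.IsPath p ∧ (∀ s ∈ p.head?, G.IsSource s) ∧ (∀ t ∈ p.getLast?, G.IsSink t)

/-- Total weight of the decomposition entries whose path contains `p` as a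
(contiguous) subpath. -/
def coverWeight (G : FlowGraph V) (p : List V) (D : List (List V × ℚ)) : ℚ :=
  (D.map (fun Pw => if p <:+: Pw.1 then Pw.2 else 0)).sum

/-- A flow decomposition: a finite list of source-to-sink paths with positive
weights such that on every edge the weights of the paths through it sum to the flow. -/
def IsFlowDecomposition (D : List (List V × ℚ)) : Prop :=
  (∀ Pw ∈ D, G.IsSourceSinkPath Pw.1 ∧ 0 < Pw.2) ∧
  (∀ u v : V, G.E u v → G.coverWeight [u, v] D = G.f u v)

/-- `p` is `w`-safe: in every flow decomposition the total weight of the paths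
containing `p` as a subpath is at least `w`. -/
def IsWSafe (p : List V) (w : ℚ) : Prop :=
  ∀ D, G.IsFlowDecomposition D → w ≤ G.coverWeight p D

/-- A safe path: a path that is `w`-safe for some `w > 0`. -/
def IsSafe (p : List V) : Prop := G.IsPath p ∧ ∃ w : ℚ, 0 < w ∧ G.IsWSafe p w

/-- The excess flow of a path `u₁ … u_k` (diverging criterion):
`f(u₁,u₂) − Σ_{i=2}^{k−1} Σ_{x ≠ u_{i+1}} f(u_i, x)`. -/
def excess : List V → ℚ
  | u :: v :: rest =>
      G.f u v - (((v :: rest).zip rest).map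
        (fun ab => ∑ x ∈ Finset.univ.erase ab.2, G.f ab.1 x)).sum
  | _ => 0

end FlowGraph

namespace FGAux

open List

variable {α : Type*}

lemma append_cons_inj {v : α} : ∀ {l₁ m₁ l₂ m₂ : List α},
    l₁ ++ v :: l₂ = m₁ ++ v :: m₂ → v ∉ l₁ → v ∉ m₁ → l₁ = m₁ ∧ l₂ = m₂ := by
  intro l₁
  induction l₁ with
  | nil =>
    intro m₁ l₂ m₂ h hv hm
    cases m₁ with
    | nil => simpa using h
    | cons a m₁ =>
      simp only [nil_append, cons_append, List.cons.injEq] at h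
      exact absurd (h.1 ▸ mem_cons_self) hm
  | cons a l₁ ih =>
    intro m₁ l₂ m₂ h hv hm
    cases m₁ with
    | nil =>
      simp only [nil_append, cons_append, List.cons.injEq] at h
      exact absurd (h.1 ▸ mem_cons_self) hv
    | cons b m₁ =>
      simp only [cons_append, List.cons.injEq] at h
      obtain ⟨rfl, h⟩ := h
      obtain ⟨h1, h2⟩ := ih h (fun hx => hv (mem_cons_of_mem _ hx)) (fun hx => hm (mem_cons_of_mem _ hx))
      exact ⟨by rw [h1], h2⟩

lemma nodup_of_eq_append_cons {l : List α} (hl : l.Nodup) {v : α} {s t : List α}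
    (h : l = s ++ v :: t) : v ∉ s ∧ v ∉ t := by
  subst h
  rw [nodup_append] at hl
  refine ⟨fun hv => hl.2.2 v hv v mem_cons_self rfl, ?_⟩
  have := hl.2.1
  rw [nodup_cons] at this
  exact this.1

/-- unique successor in a nodup list -/
lemma succ_unique {l : List α} (hl : l.Nodup) {v x y : α}
    (hx : [v, x] <:+: l) (hy : [v, y] <:+: l) : x = y := by
  obtain ⟨s, t, hst⟩ := hx
  obtain ⟨s', t', hst'⟩ := hy
  have h : s ++ v :: (x :: t) = s' ++ v :: (y :: t') := by
    simpa using hst.trans hst'.symm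
  have hv1 : v ∉ s := (nodup_of_eq_append_cons hl (by simpa using hst.symm)).1
  have hv2 : v ∉ s' := (nodup_of_eq_append_cons hl (by simpa using hst'.symm)).1
  obtain ⟨-, h2⟩ := append_cons_inj h hv1 hv2
  exact (List.cons.injEq _ _ _ _ ▸ h2).1

/-- unique predecessor in a nodup list -/
lemma pred_unique {l : List α} (hl : l.Nodup) {v x y : α}
    (hx : [x, v] <:+: l) (hy : [y, v] <:+: l) : x = y := by
  obtain ⟨s, t, hst⟩ := hx
  obtain ⟨s', t', hst'⟩ := hy
  have h : (s ++ [x]) ++ v :: t = (s' ++ [y]) ++ v :: t' := by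
    have := hst.trans hst'.symm
    simpa using this
  have hv1 : v ∉ s ++ [x] :=
    (nodup_of_eq_append_cons hl (show l = (s ++ [x]) ++ v :: t by simp [← hst])).1
  have hv2 : v ∉ s' ++ [y] :=
    (nodup_of_eq_append_cons hl (show l = (s' ++ [y]) ++ v :: t' by simp [← hst'])).1
  obtain ⟨h1, -⟩ := append_cons_inj h hv1 hv2
  have := congrArg List.getLast? h1
  simpa using this

/-- splitting an edge-infix at a distinguished position -/
lemma infix_pair_split {v x y : α} : ∀ {l₁ : List α} {l₂ : List α},
    [x, y] <:+: l₁ ++ v :: l₂ ↔ [x, y] <:+: l₁ ++ [v] ∨ [x, y] <:+: v :: l₂ := by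
  intro l₁
  induction l₁ with
  | nil =>
    intro l₂
    constructor
    · intro h; exact Or.inr (by simpa using h)
    · rintro (h | h)
      · obtain ⟨s, t, hst⟩ := h
        -- s ++ [x,y] ++ t = [v] : impossible by lengths
        exfalso
        have := congrArg List.length hst
        simp at this; omega
      · simpa using h
  | cons a l₁ ih =>
    intro l₂
    constructor
    · intro h
      rw [cons_append, infix_cons_iff] at h
      rcases h with h | h
      · obtain ⟨t, ht⟩ := h
        rw [show [x, y] ++ t = x :: (y :: t) from rfl] at ht
        rw [List.cons.injEq] at ht
        obtain ⟨rfl, ht⟩ := ht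
        cases l₁ with
        | nil =>
          simp only [nil_append] at ht
          rw [List.cons.injEq] at ht
          obtain ⟨rfl, -⟩ := ht
          exact Or.inl ⟨[], [], by simp⟩
        | cons b l₁ =>
          simp only [cons_append] at ht
          rw [List.cons.injEq] at ht
          obtain ⟨rfl, -⟩ := ht
          exact Or.inl ⟨[], l₁ ++ [v], by simp⟩
      · rcases (ih (l₂ := l₂)).mp h with h' | h'
        · exact Or.inl (h'.trans ⟨[a], [], by simp⟩)
        · exact Or.inr h'
    · rintro (h | h)
      · exact h.trans ⟨[], l₂, by simp⟩
      · exact h.trans ⟨a :: l₁, [], by simp⟩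

/-- a pair starting at `v` cannot be an infix of a list whose only `v` is last -/
lemma not_pair_infix_append_last {l₁ : List α} {v y : α} (hv : v ∉ l₁) :
    ¬ [v, y] <:+: l₁ ++ [v] := by
  rintro ⟨s, t, hst⟩
  have h' : s ++ v :: (y :: t) = l₁ ++ v :: [] := by simpa using hst
  have hlen : s.length + 2 + t.length = l₁.length + 1 := by
    have := congrArg List.length h'
    simp at this; omega
  have hsp : s <+: l₁ ++ [v] := ⟨v :: y :: t, h'⟩
  have hsl : s <+: l₁ := prefix_of_prefix_length_le hsp (prefix_append l₁ [v]) (by omega)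
  have hvs : v ∉ s := fun h => hv (hsl.subset h)
  obtain ⟨-, h2⟩ := append_cons_inj h' hvs hv
  simp at h2

/-- In a nodup list split at `v`, a pair-infix cannot lie on both sides. -/
lemma infix_pair_not_both {l₁ l₂ : List α} {v x y : α}
    (hnd : (l₁ ++ v :: l₂).Nodup)
    (h1 : [x, y] <:+: l₁ ++ [v]) (h2 : [x, y] <:+: v :: l₂) : False := by
  have hv : v ∉ l₁ ∧ v ∉ l₂ := nodup_of_eq_append_cons hnd rfl
  have hx1 : x ∈ l₁ ++ [v] := h1.subset (by simp)
  have hx2 : x ∈ v :: l₂ := h2.subset (by simp)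
  rw [mem_append, mem_singleton] at hx1
  rw [mem_cons] at hx2
  rcases hx1 with hx1 | rfl
  · rcases hx2 with rfl | hx2
    · exact hv.1 hx1
    · rw [nodup_append] at hnd
      exact hnd.2.2 x hx1 x (mem_cons_of_mem _ hx2) rfl
  · exact not_pair_infix_append_last hv.1 h1


/-- positioned suffix lemma: an infix ending at the unique occurrence of `v` -/
lemma infix_suffix_of_getLast {l₁ l₂ r : List α} {v : α}
    (hnd : (l₁ ++ v :: l₂).Nodup) (h : r <:+: l₁ ++ v :: l₂)
    (hlast : r.getLast? = some v) : r <:+ l₁ ++ [v] := by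
  obtain ⟨r', rfl⟩ := List.getLast?_eq_some_iff.mp hlast
  obtain ⟨s, t, hst⟩ := h
  have h' : (s ++ r') ++ v :: t = l₁ ++ v :: l₂ := by simpa using hst
  have hv1 : v ∉ s ++ r' := (nodup_of_eq_append_cons hnd h'.symm).1
  have hv2 : v ∉ l₁ := (nodup_of_eq_append_cons hnd rfl).1
  obtain ⟨h1, -⟩ := append_cons_inj h' hv1 hv2
  exact ⟨s, by rw [← h1]; simp⟩


/-- positioned prefix lemma: an infix starting at the unique occurrence of `v` -/
lemma infix_prefix_of_head {l₁ l₂ r : List α} {v : α}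
    (hnd : (l₁ ++ v :: l₂).Nodup) (h : r <:+: l₁ ++ v :: l₂)
    (hhead : r.head? = some v) : r <+: v :: l₂ := by
  cases r with
  | nil => simp at hhead
  | cons a r' =>
    rw [head?_cons, Option.some.injEq] at hhead
    obtain ⟨s, t, hst⟩ := h
    rw [hhead] at hst
    have h' : s ++ v :: (r' ++ t) = l₁ ++ v :: l₂ := by simpa using hst
    have hv1 : v ∉ s := (nodup_of_eq_append_cons hnd h'.symm).1
    have hv2 : v ∉ l₁ := (nodup_of_eq_append_cons hnd rfl).1
    obtain ⟨-, h2⟩ := append_cons_inj h' hv1 hv2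
    exact hhead ▸ ⟨t, by rw [← h2]; rfl⟩

lemma transGen_of_chain'_cons {E : α → α → Prop} :
    ∀ {l : List α} {a b : α}, List.Chain' E (a :: l) → b ∈ l → Relation.TransGen E a b := by
  intro l
  induction l with
  | nil => intro a b _ hb; simp at hb
  | cons c l ih =>
    intro a b hc hb
    rw [List.Chain', List.isChain_cons_cons] at hc
    rw [mem_cons] at hb
    rcases hb with rfl | hb
    · exact Relation.TransGen.single hc.1
    · exact (Relation.TransGen.single hc.1).trans (ih hc.2 hb)

lemma nodup_of_chain' {E : α → α → Prop} (hac : ∀ v, ¬ Relation.TransGen E v v) :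
    ∀ {l : List α}, List.Chain' E l → l.Nodup := by
  intro l
  induction l with
  | nil => intro _; exact nodup_nil
  | cons a l ih =>
    intro hc
    rw [nodup_cons]
    refine ⟨fun ha => hac a (transGen_of_chain'_cons hc ha), ih hc.tail⟩

lemma two_mem_perm {α : Type*} [DecidableEq α] {A B : α} {l : List α}
    (hA : A ∈ l) (hB : B ∈ l) (hAB : A ≠ B) : ∃ l₀, l.Perm (A :: B :: l₀) := by
  have h1 : l.Perm (A :: l.erase A) := perm_cons_erase hA
  have hBe : B ∈ l.erase A := by
    have h2 := h1.mem_iff.mp hB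
    rcases mem_cons.mp h2 with h | h
    · exact absurd h.symm hAB
    · exact h
  have h3 : (l.erase A).Perm (B :: (l.erase A).erase B) := perm_cons_erase hBe
  exact ⟨(l.erase A).erase B, h1.trans (h3.cons A)⟩

lemma exists_min_list : ∀ {l : List ℚ}, l ≠ [] → ∃ m ∈ l, ∀ x ∈ l, m ≤ x := by
  intro l
  induction l with
  | nil => intro h; exact absurd rfl h
  | cons a l ih =>
    intro _
    rcases eq_or_ne l [] with rfl | hl
    · exact ⟨a, by simp⟩
    · obtain ⟨m, hm, hmin⟩ := ih hl
      rcases le_total a m with h | h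
      · exact ⟨a, by simp, by
          intro x hx
          rw [mem_cons] at hx
          rcases hx with rfl | hx
          · exact le_refl x
          · exact h.trans (hmin x hx)⟩
      · exact ⟨m, mem_cons_of_mem _ hm, by
          intro x hx
          rw [mem_cons] at hx
          rcases hx with rfl | hx
          · exact h
          · exact hmin x hx⟩


lemma not_pair_infix_short {c d a : α} : ¬ [c, d] <:+: [a] := by
  rintro ⟨s, t, h⟩
  have := congrArg List.length h
  simp at this; omega

lemma pair_mem_zip_iff_infix : ∀ {l : List α} {c d : α},
    (c, d) ∈ l.zip l.tail ↔ [c, d] <:+: l := by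
  intro l
  induction l with
  | nil => intro c d; simp
  | cons a l ih =>
    intro c d
    cases l with
    | nil => simpa using not_pair_infix_short
    | cons b l =>
      rw [show (a :: b :: l).zip (a :: b :: l).tail = (a, b) :: ((b :: l).zip (b :: l).tail) from rfl]
      constructor
      · intro h
        rw [mem_cons] at h
        rcases h with h | h
        · rw [Prod.mk.injEq] at h
          exact ⟨[], l, by rw [h.1, h.2]; rfl⟩
        · exact (ih.mp h).trans ⟨[a], [], by simp⟩
      · intro h
        rw [infix_cons_iff] at h
        rcases h with h | h
        · obtain ⟨t, ht⟩ := h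
          simp only [cons_append, List.cons.injEq, nil_append] at ht
          exact mem_cons.mpr (Or.inl (by rw [Prod.mk.injEq]; exact ⟨ht.1, ht.2.1⟩))
        · exact mem_cons_of_mem _ (ih.mpr h)

lemma zip_tail_snoc : ∀ {m : List α} {x : α} (v : α), m.getLast? = some v →
    (m ++ [x]).zip (m ++ [x]).tail = m.zip m.tail ++ [(v, x)] := by
  intro m
  induction m with
  | nil => intro x v h; simp at h
  | cons a m ih =>
    intro x v h
    cases m with
    | nil =>
      simp only [getLast?_singleton, Option.some.injEq] at h
      subst h
      rfl
    | cons b m =>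
      rw [getLast?_cons_cons] at h
      have := ih (x := x) v h
      rw [show ((a :: b :: m) ++ [x]).zip ((a :: b :: m) ++ [x]).tail
            = (a, b) :: (((b :: m) ++ [x]).zip ((b :: m) ++ [x]).tail) from rfl, this]
      rfl

end FGAux

section Blocks
namespace FlowGraph

open FGAux List

variable {V : Type} [Fintype V] [DecidableEq V] (G : FlowGraph V)

lemma path_nodup {l : List V} (hc : l.Chain' G.E) : l.Nodup :=
  FGAux.nodup_of_chain' G.acyclic hc

lemma coverWeight_nil (p : List V) : G.coverWeight p [] = 0 := rfl

lemma coverWeight_cons (p : List V) (Pw : List V × ℚ) (D : List (List V × ℚ)) :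
    G.coverWeight p (Pw :: D) = (if p <:+: Pw.1 then Pw.2 else 0) + G.coverWeight p D := by
  simp [coverWeight]

lemma coverWeight_nonneg (p : List V) (D : List (List V × ℚ))
    (hD : ∀ Pw ∈ D, 0 < Pw.2) : 0 ≤ G.coverWeight p D := by
  induction D with
  | nil => exact le_refl 0
  | cons Pw D ih =>
    rw [coverWeight_cons]
    have h1 : (0:ℚ) ≤ (if p <:+: Pw.1 then Pw.2 else 0) := by
      split
      · exact (hD Pw mem_cons_self).le
      · exact le_refl 0
    have h2 := ih (fun q hq => hD q (mem_cons_of_mem _ hq))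
    linarith

lemma coverWeight_perm (p : List V) {D D' : List (List V × ℚ)} (h : D.Perm D') :
    G.coverWeight p D = G.coverWeight p D' :=
  List.Perm.sum_eq (h.map _)

lemma coverWeight_mono {p p' : List V} (h : p <:+: p') (D : List (List V × ℚ))
    (hD : ∀ Pw ∈ D, 0 < Pw.2) : G.coverWeight p' D ≤ G.coverWeight p D := by
  induction D with
  | nil => exact le_refl 0
  | cons Pw D ih =>
    rw [coverWeight_cons, coverWeight_cons]
    have h2 := ih (fun q hq => hD q (mem_cons_of_mem _ hq))
    have h1 : (if p' <:+: Pw.1 then Pw.2 else 0) ≤ (if p <:+: Pw.1 then Pw.2 else 0) := by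
      by_cases hp' : p' <:+: Pw.1
      · rw [if_pos hp', if_pos (h.trans hp')]
      · rw [if_neg hp']
        split
        · exact (hD Pw mem_cons_self).le
        · exact le_refl 0
    linarith

lemma coverWeight_edge {D : List (List V × ℚ)} (hD : G.IsFlowDecomposition D) (u v : V) :
    G.coverWeight [u, v] D = G.f u v := by
  by_cases hE : G.E u v
  · exact hD.2 u v hE
  · rw [G.f_eq_zero u v hE]
    have : ∀ Pw ∈ D, ¬ ([u, v] <:+: Pw.1) := by
      intro Pw hPw hinf
      have hc : List.Chain' G.E Pw.1 := ((hD.1 Pw hPw).1.1.2)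
      have := (hc.infix hinf)
      rw [List.isChain_pair] at this
      exact hE this
    unfold coverWeight
    rw [List.sum_eq_zero]
    intro x hx
    rw [List.mem_map] at hx
    obtain ⟨Pw, hPw, rfl⟩ := hx
    rw [if_neg (this Pw hPw)]

lemma sum_erase_eq (v b : V) : ∑ x ∈ Finset.univ.erase b, G.f v x = G.fout v - G.f v b := by
  rw [Finset.sum_erase_eq_sub (Finset.mem_univ b)]
  rfl

lemma excess_pair (u v : V) : G.excess [u, v] = G.f u v := by
  simp [excess]

lemma excess_snoc {p : List V} {v : V} (b : V) (h2 : 2 ≤ p.length) (hv : p.getLast? = some v) :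
    G.excess (p ++ [b]) = G.excess p - (G.fout v - G.f v b) := by
  match p, h2 with
  | u :: w :: rest, _ =>
    have hlast : (w :: rest).getLast? = some v := by
      rwa [List.getLast?_cons_cons] at hv
    have hzip := FGAux.zip_tail_snoc (m := w :: rest) (x := b) v hlast
    rw [show (u :: w :: rest) ++ [b] = u :: w :: (rest ++ [b]) from rfl]
    show G.f u w - (((w :: (rest ++ [b])).zip (rest ++ [b])).map _).sum = _
    have heq : (w :: (rest ++ [b])).zip (rest ++ [b])
        = (w :: rest).zip rest ++ [(v, b)] := by
      have : (w :: (rest ++ [b])) = (w :: rest) ++ [b] := rfl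
      rw [this]
      have : rest ++ [b] = ((w :: rest) ++ [b]).tail := rfl
      rw [this]
      rw [hzip]
      rfl
    rw [heq, List.map_append, List.sum_append]
    show G.f u w - ((((w :: rest).zip rest).map _).sum + (∑ x ∈ Finset.univ.erase b, G.f v x + 0)) = _
    rw [G.sum_erase_eq v b]
    show _ = G.f u w - (((w :: rest).zip rest).map _).sum - (G.fout v - G.f v b)
    ring

lemma excess_cons' (a x y : V) (rest : List V) :
    G.excess (a :: x :: y :: rest) = G.excess (x :: y :: rest) + G.f a x - G.fout x := by
  show G.f a x - (((x :: y :: rest).zip (y :: rest)).map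
      (fun ab => ∑ z ∈ Finset.univ.erase ab.2, G.f ab.1 z)).sum
    = (G.f x y - (((y :: rest).zip rest).map _).sum) + G.f a x - G.fout x
  rw [show (x :: y :: rest).zip (y :: rest) = (x, y) :: ((y :: rest).zip rest) from rfl]
  rw [List.map_cons, List.sum_cons]
  rw [G.sum_erase_eq x y]
  ring

lemma excess_cons {p : List V} {u w : V} (a : V) (hu : p.head? = some u)
    (hw : p.tail.head? = some w) :
    G.excess (a :: p) = G.excess p + G.f a u - G.fout u := by
  match p with
  | [] => simp at hu
  | [x] => simp at hw
  | x :: y :: rest =>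
    have hx : x = u := by simpa using hu
    have hy : y = w := by simpa using hw
    rw [← hx]
    exact G.excess_cons' a x y rest

end FlowGraph
end Blocks

section BlockC
namespace FlowGraph
open FGAux List
variable {V : Type} [Fintype V] [DecidableEq V] (G : FlowGraph V)

lemma ite_nonneg' {c : Prop} [Decidable c] {w : ℚ} (hw : 0 ≤ w) :
    (0:ℚ) ≤ (if c then w else 0) := by
  split
  · exact hw
  · exact le_refl 0

lemma cover_diverge {q' q : List V} {v b : V} (hq : q = q' ++ [b])
    (hv : q'.getLast? = some v) (hEvb : G.E v b)
    {D : List (List V × ℚ)} (hD : G.IsFlowDecomposition D) :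
    G.coverWeight q' D ≤ G.coverWeight q D
      + ∑ x ∈ Finset.univ.erase b, G.coverWeight [v, x] D := by
  have hDall := hD.1
  clear hD
  induction D with
  | nil => simp [coverWeight]
  | cons R D ih =>
    have hR := hDall R mem_cons_self
    have hD' : ∀ Pw ∈ D, G.IsSourceSinkPath Pw.1 ∧ 0 < Pw.2 :=
      fun Pw hPw => hDall Pw (mem_cons_of_mem _ hPw)
    have ihD := ih hD'
    rw [coverWeight_cons, coverWeight_cons]
    have hsum : ∑ x ∈ Finset.univ.erase b, G.coverWeight [v, x] (R :: D)
        = (∑ x ∈ Finset.univ.erase b, (if [v, x] <:+: R.1 then R.2 else 0))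
          + ∑ x ∈ Finset.univ.erase b, G.coverWeight [v, x] D := by
      rw [← Finset.sum_add_distrib]
      apply Finset.sum_congr rfl
      intro x _
      rw [coverWeight_cons]
    rw [hsum]
    -- per-entry inequality
    have hentry : (if q' <:+: R.1 then R.2 else 0)
        ≤ (if q <:+: R.1 then R.2 else 0)
          + ∑ x ∈ Finset.univ.erase b, (if [v, x] <:+: R.1 then R.2 else 0) := by
      have hsumnn : (0:ℚ) ≤ ∑ x ∈ Finset.univ.erase b, (if [v, x] <:+: R.1 then R.2 else 0) :=
        Finset.sum_nonneg (fun x _ => ite_nonneg' hR.2.le)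
      by_cases hq' : q' <:+: R.1
      · obtain ⟨s, t, hst⟩ := id hq'
        cases t with
        | nil =>
          exfalso
          have hsuf : R.1.getLast? = some v := by
            rw [← hst]
            simp only [append_nil]
            rw [List.getLast?_append]
            rw [hv]
            rfl
          have hsink := hR.1.2.2 v hsuf
          exact hsink b hEvb
        | cons c t' =>
          by_cases hcb : c = b
          · subst hcb
            have hqinf : q <:+: R.1 := ⟨s, t', by rw [hq, ← hst]; simp⟩
            rw [if_pos hq', if_pos hqinf]
            linarith
          · obtain ⟨q'', hq''⟩ := List.getLast?_eq_some_iff.mp hv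
            have hvc : [v, c] <:+: R.1 :=
              ⟨s ++ q'', t', by rw [← hst, hq'']; simp⟩
            have hkey : R.2 ≤ ∑ x ∈ Finset.univ.erase b, (if [v, x] <:+: R.1 then R.2 else 0) := by
              have h0 := Finset.single_le_sum (f := fun x => (if [v, x] <:+: R.1 then R.2 else 0))
                (fun x _ => ite_nonneg' hR.2.le)
                (Finset.mem_erase.mpr ⟨hcb, Finset.mem_univ c⟩)
              have h1 : ((fun x => (if [v, x] <:+: R.1 then R.2 else 0)) c) = R.2 := if_pos hvc
              rw [show (if [v, c] <:+: R.1 then R.2 else 0) = R.2 from h1] at h0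
              exact h0
            rw [if_pos hq']
            have := ite_nonneg' (c := q <:+: R.1) hR.2.le
            linarith
      · rw [if_neg hq']
        have := ite_nonneg' (c := q <:+: R.1) hR.2.le
        linarith
    linarith

lemma excess_le_cover : ∀ (n : ℕ) (q : List V), q.length ≤ n → 2 ≤ q.length → q.Chain' G.E →
    ∀ D, G.IsFlowDecomposition D → G.excess q ≤ G.coverWeight q D := by
  intro n
  induction n with
  | zero => intro q h1 h2; omega
  | succ n ih =>
    intro q hlen h2 hc D hD
    rcases eq_or_lt_of_le h2 with h2' | h3
    · -- length exactly 2
      match q, h2'.symm with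
      | [u, v], _ =>
        have hE : G.E u v := by
          have := hc
          rw [List.Chain', List.isChain_pair] at this
          exact this
        rw [G.excess_pair, G.coverWeight_edge hD]
    · -- length ≥ 3
      rcases List.eq_nil_or_concat q with rfl | ⟨q', b, rfl⟩
      · simp at h2
      rw [List.concat_eq_append] at *
      have hq'len : 2 ≤ q'.length := by
        rw [List.length_append] at h3
        simp at h3
        omega
      have hq'ne : q' ≠ [] := by intro h; subst h; simp at hq'len
      obtain ⟨v, hv⟩ : ∃ v, q'.getLast? = some v := by
        cases hg : q'.getLast? with
        | none => exact absurd (List.getLast?_eq_none_iff.mp hg) hq'ne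
        | some v => exact ⟨v, rfl⟩
      rw [List.Chain', List.isChain_append] at hc
      have hEvb : G.E v b := hc.2.2 v hv b rfl
      have hc' : q'.Chain' G.E := hc.1
      have ihq' := ih q' (by rw [List.length_append] at hlen; simp at hlen; omega) hq'len hc' D hD
      have hdiv := G.cover_diverge rfl hv hEvb hD
      have hsnoc := G.excess_snoc b hq'len hv
      have hedge : ∀ x, G.coverWeight [v, x] D = G.f v x := G.coverWeight_edge hD v
      have hsum : ∑ x ∈ Finset.univ.erase b, G.coverWeight [v, x] D = G.fout v - G.f v b := by
        rw [Finset.sum_congr rfl (fun x _ => hedge x)]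
        exact G.sum_erase_eq v b
      rw [hsum] at hdiv
      rw [hsnoc]
      linarith

end FlowGraph
end BlockC

section BlockD
namespace FlowGraph
open FGAux List
variable {V : Type} [Fintype V] [DecidableEq V] (G : FlowGraph V)

lemma f_nonneg (u v : V) : 0 ≤ G.f u v := by
  by_cases h : G.E u v
  · exact (G.f_pos u v h).le
  · rw [G.f_eq_zero u v h]

lemma fin_pos {u v : V} (h : G.E u v) : 0 < G.fin v := by
  have h1 : G.f u v ≤ G.fin v :=
    Finset.single_le_sum (fun x _ => G.f_nonneg x v) (Finset.mem_univ u)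
  exact lt_of_lt_of_le (G.f_pos u v h) h1

lemma fout_pos {u v : V} (h : G.E u v) : 0 < G.fout u := by
  have h1 : G.f u v ≤ G.fout u :=
    Finset.single_le_sum (fun x _ => G.f_nonneg u x) (Finset.mem_univ v)
  exact lt_of_lt_of_le (G.f_pos u v h) h1

lemma wf_fwd : WellFounded (fun a b : V => G.E b a) := by
  have hir : IsIrrefl V (Relation.TransGen fun a b : V => G.E b a) := by
    constructor
    intro v hv
    exact G.acyclic v (by rwa [show (fun a b : V => G.E b a) = Function.swap G.E from rfl,
      Relation.transGen_swap] at hv)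
  have hwf : WellFounded (Relation.TransGen fun a b : V => G.E b a) :=
    @Finite.wellFounded_of_trans_of_irrefl V _ _ (inferInstance) hir
  exact Subrelation.wf
    (fun h => Relation.TransGen.single (r := fun a b : V => G.E b a) h) hwf

lemma wf_bwd : WellFounded (fun a b : V => G.E a b) := by
  have hir : IsIrrefl V (Relation.TransGen fun a b : V => G.E a b) := ⟨fun v h => G.acyclic v h⟩
  have hwf : WellFounded (Relation.TransGen fun a b : V => G.E a b) :=
    @Finite.wellFounded_of_trans_of_irrefl V _ _ (inferInstance) hir
  exact Subrelation.wf
    (fun h => Relation.TransGen.single (r := fun a b : V => G.E a b) h) hwf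

lemma toSink (v : V) : ∃ l t, List.Chain' G.E (v :: l) ∧ (v :: l).getLast? = some t
    ∧ G.IsSink t := by
  induction v using (G.wf_fwd).induction with
  | _ v ih =>
    by_cases hs : G.IsSink v
    · exact ⟨[], v, by exact List.isChain_singleton v, by simp, hs⟩
    · rw [IsSink] at hs
      push_neg at hs
      obtain ⟨w, hw⟩ := hs
      obtain ⟨l, t, hc, hl, ht⟩ := ih w hw
      exact ⟨w :: l, t, by rw [List.Chain', List.isChain_cons_cons]; exact ⟨hw, hc⟩,
        by rwa [List.getLast?_cons_cons], ht⟩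

lemma toSource (v : V) : ∃ l s, List.Chain' G.E (l ++ [v]) ∧ (l ++ [v]).head? = some s
    ∧ G.IsSource s := by
  induction v using (G.wf_bwd).induction with
  | _ v ih =>
    by_cases hs : G.IsSource v
    · exact ⟨[], v, by exact List.isChain_singleton v, by simp, hs⟩
    · rw [IsSource] at hs
      push_neg at hs
      obtain ⟨u, hu⟩ := hs
      obtain ⟨l, s, hc, hl, hsrc⟩ := ih u hu
      refine ⟨l ++ [u], s, ?_, ?_, hsrc⟩
      · refine List.IsChain.append hc (List.isChain_singleton v) ?_
        intro x hx y hy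
        rw [List.getLast?_concat] at hx
        simp only [Option.mem_def, Option.some.injEq, List.head?_cons] at hx hy
        rw [hx, hy] at hu
        exact hu
      · rw [List.head?_append, hl]
        rfl

lemma path_through_edge {a b : V} (hE : G.E a b) :
    ∃ p, G.IsSourceSinkPath p ∧ [a, b] <:+: p := by
  obtain ⟨l₁, s, hc₁, hh₁, hsrc⟩ := G.toSource a
  obtain ⟨l₂, t, hc₂, hl₂, hsink⟩ := G.toSink b
  refine ⟨(l₁ ++ [a]) ++ (b :: l₂), ⟨⟨?_, ?_⟩, ?_, ?_⟩, ⟨l₁, l₂, by simp⟩⟩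
  · rw [List.length_append]
    simp
    omega
  · refine List.IsChain.append hc₁ hc₂ ?_
    intro x hx y hy
    rw [List.getLast?_concat] at hx
    rw [List.head?_cons] at hy
    simp only [Option.mem_def, Option.some.injEq] at hx hy
    rw [hx, hy] at hE
    exact hE
  · intro s' hs'
    rw [List.head?_append, hh₁] at hs'
    simp only [Option.or, Option.mem_def, Option.some.injEq] at hs'
    rwa [← hs']
  · intro t' ht'
    rw [List.getLast?_append, hl₂] at ht'
    simp only [Option.or, Option.mem_def, Option.some.injEq] at ht'
    rwa [← ht']

lemma ssp_transfer {G G'' : FlowGraph V} (hsubE : ∀ u v, G''.E u v → G.E u v)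
    (hsrc : ∀ v, (∃ w, G''.E v w) → G''.IsSource v → G.IsSource v)
    (hsink : ∀ v, (∃ u, G''.E u v) → G''.IsSink v → G.IsSink v) :
    ∀ q, G''.IsSourceSinkPath q → G.IsSourceSinkPath q := by
  intro q hq
  obtain ⟨⟨hlen, hch⟩, hhd, hlst⟩ := hq
  refine ⟨⟨hlen, hch.imp hsubE⟩, ?_, ?_⟩
  · intro s hs
    match q, hlen with
    | x :: y :: rest, _ =>
      have hx : x = s := by simpa using hs
      rw [← hx]
      have hEs : G''.E x y := (List.isChain_cons_cons.mp hch).1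
      exact hsrc x ⟨y, hEs⟩ (hhd x (by simp))
  · intro t ht
    -- t is the last; it has an incoming G''-edge
    match q, hlen with
    | x :: y :: rest, _ =>
      -- decompose from the back
      rcases List.eq_nil_or_concat (x :: y :: rest) with h | ⟨L, c, hL⟩
      · simp at h
      · have hc : c = t := by
          have h2 := ht
          rw [Option.mem_def, hL, List.concat_eq_append, List.getLast?_concat,
            Option.some.injEq] at h2
          exact h2
        subst hc
        have hLne : L ≠ [] := by
          intro h; rw [h] at hL; simp at hL
        obtain ⟨L', d, hL'⟩ := List.eq_nil_or_concat L |>.resolve_left hLne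
        rw [List.concat_eq_append] at hL hL'
        have hEd : G''.E d c := by
          have hch' := hL ▸ hch
          rw [hL'] at hch'
          have : List.Chain' G''.E ((L' ++ [d]) ++ [c]) := by
            rw [List.append_assoc] at hch' ⊢
            exact hch'
          rw [List.Chain', List.isChain_append] at this
          exact this.2.2 d (by rw [List.getLast?_concat]; rfl) c (by simp)
        exact hsink c ⟨d, hEd⟩ (hlst c (by rw [Option.mem_def, hL, List.getLast?_concat]))

lemma exists_decomposition_aux :
    ∀ (n : ℕ) (G : FlowGraph V), {e : V × V | G.E e.1 e.2}.ncard ≤ n →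
      ∃ D, G.IsFlowDecomposition D := by
  intro n
  induction n with
  | zero =>
    intro G hn
    refine ⟨[], ⟨by simp, ?_⟩⟩
    intro u v h
    exfalso
    have h1 : ({((u,v) : V × V)} : Set (V × V)) ⊆ {e : V × V | G.E e.1 e.2} := by
      intro e he
      rw [Set.mem_singleton_iff] at he
      subst he
      exact h
    have h2 := Set.ncard_le_ncard h1 (Set.toFinite _)
    rw [Set.ncard_singleton] at h2
    omega
  | succ n ih =>
    intro G hn
    by_cases hEex : ∃ a b, G.E a b
    swap
    · refine ⟨[], ⟨by simp, ?_⟩⟩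
      intro u v h
      exact absurd ⟨u, v, h⟩ hEex
    obtain ⟨a, b, hab⟩ := hEex
    obtain ⟨p, hp, hinfab⟩ := G.path_through_edge hab
    have hlen2 : 2 ≤ p.length := hp.1.1
    have hch : p.Chain' G.E := hp.1.2
    have hnd : p.Nodup := G.path_nodup hch
    have hzipne : (p.zip p.tail).map (fun e => G.f e.1 e.2) ≠ [] := by
      match p, hlen2 with
      | x :: y :: rest, _ => simp
    obtain ⟨m, hmmem, hmin⟩ := FGAux.exists_min_list hzipne
    rw [List.mem_map] at hmmem
    obtain ⟨e₀, he₀, he₀f⟩ := hmmem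
    have hinf₀ : [e₀.1, e₀.2] <:+: p := FGAux.pair_mem_zip_iff_infix.mp he₀
    have hE₀ : G.E e₀.1 e₀.2 := by
      have := hch.infix hinf₀
      rwa [List.isChain_pair] at this
    have hmpos : 0 < m := he₀f ▸ G.f_pos _ _ hE₀
    have hminf : ∀ u v : V, [u, v] <:+: p → m ≤ G.f u v := by
      intro u v h
      exact hmin _ (List.mem_map.mpr ⟨(u, v), FGAux.pair_mem_zip_iff_infix.mpr h, rfl⟩)
    set F : V → V → ℚ := fun u v => if [u, v] <:+: p then G.f u v - m else G.f u v with hF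
    have hFnn : ∀ u v, 0 ≤ F u v := by
      intro u v
      rw [hF]
      dsimp only
      split
      · have := hminf u v (by assumption)
        linarith
      · exact G.f_nonneg u v
    have hFle : ∀ u v, F u v ≤ G.f u v := by
      intro u v
      rw [hF]; dsimp only
      split
      · linarith
      · exact le_refl _
    have hsubE : ∀ u v, 0 < F u v → G.E u v := by
      intro u v h
      by_contra hne
      have h0 : G.f u v = 0 := G.f_eq_zero u v hne
      have : F u v ≤ 0 := (hFle u v).trans h0.le
      linarith
    -- positional helpers
    have hpredinf : ∀ {s : List V} {v : V} {t : List V}, p = s ++ v :: t → s ≠ [] →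
        ∃ u₀, [u₀, v] <:+: p := by
      intro s v t hst hs
      obtain ⟨s', u₀, hs'⟩ := List.eq_nil_or_concat s |>.resolve_left hs
      rw [List.concat_eq_append] at hs'
      exact ⟨u₀, ⟨s', t, by rw [hst, hs']; simp⟩⟩
    have hsuccinf : ∀ {s : List V} {v : V} {t : List V}, p = s ++ v :: t → t ≠ [] →
        ∃ w₀, [v, w₀] <:+: p := by
      intro s v t hst ht
      match t, ht with
      | c :: t', _ => exact ⟨c, ⟨s, t', by rw [hst]; simp⟩⟩
    have hheadsrc : ∀ {v : V} {t : List V}, p = v :: t → G.IsSource v := by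
      intro v t hst
      exact hp.2.1 v (by rw [hst]; simp)
    have hlastsink : ∀ {s : List V} {v : V}, p = s ++ [v] → G.IsSink v := by
      intro s v hst
      exact hp.2.2 v (by rw [hst, List.getLast?_concat]; rfl)
    -- sum computations
    have hsumin : ∀ (v u₀ : V), [u₀, v] <:+: p → ∑ u, F u v = G.fin v - m := by
      intro v u₀ h₀
      have h1 : ∀ u, F u v = G.f u v - (if u = u₀ then m else 0) := by
        intro u
        rw [hF]; dsimp only
        by_cases hin : [u, v] <:+: p
        · rw [if_pos hin, if_pos (FGAux.pred_unique hnd hin h₀)]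
        · rw [if_neg hin, if_neg ?_]
          · ring
          · intro he; subst he; exact hin h₀
      rw [Finset.sum_congr rfl (fun u _ => h1 u), Finset.sum_sub_distrib]
      have h2 : (∑ u : V, (if u = u₀ then m else 0)) = m := by
        simp [Finset.sum_ite_eq']
      rw [h2]
      rfl
    have hsumin' : ∀ (v : V), (∀ u, ¬ [u, v] <:+: p) → ∑ u, F u v = G.fin v := by
      intro v h₀
      apply Finset.sum_congr rfl
      intro u _
      rw [hF]; dsimp only
      rw [if_neg (h₀ u)]
    have hsumout : ∀ (v w₀ : V), [v, w₀] <:+: p → ∑ w, F v w = G.fout v - m := by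
      intro v w₀ h₀
      have h1 : ∀ w, F v w = G.f v w - (if w = w₀ then m else 0) := by
        intro w
        rw [hF]; dsimp only
        by_cases hin : [v, w] <:+: p
        · rw [if_pos hin, if_pos (FGAux.succ_unique hnd hin h₀)]
        · rw [if_neg hin, if_neg ?_]
          · ring
          · intro he; subst he; exact hin h₀
      rw [Finset.sum_congr rfl (fun w _ => h1 w), Finset.sum_sub_distrib]
      have h2 : (∑ w : V, (if w = w₀ then m else 0)) = m := by
        simp [Finset.sum_ite_eq']
      rw [h2]
      rfl
    have hsumout' : ∀ (v : V), (∀ w, ¬ [v, w] <:+: p) → ∑ w, F v w = G.fout v := by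
      intro v h₀
      apply Finset.sum_congr rfl
      intro w _
      rw [hF]; dsimp only
      rw [if_neg (h₀ w)]
    -- no-pred implies head, no-succ implies last (for v ∈ p)
    have hnopred : ∀ v ∈ p, (∀ u, ¬ [u, v] <:+: p) → p.head? = some v := by
      intro v hv h
      obtain ⟨s, t, hst⟩ := List.append_of_mem hv
      cases s with
      | nil => rw [hst]; rfl
      | cons x s' =>
        obtain ⟨u₀, hu₀⟩ := hpredinf hst (by simp)
        exact absurd hu₀ (h u₀)
    have hnosucc : ∀ v ∈ p, (∀ w, ¬ [v, w] <:+: p) → p.getLast? = some v := by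
      intro v hv h
      obtain ⟨s, t, hst⟩ := List.append_of_mem hv
      cases t with
      | nil => rw [hst, List.getLast?_concat]
      | cons c t' =>
        obtain ⟨w₀, hw₀⟩ := hsuccinf hst (by simp)
        exact absurd hw₀ (h w₀)
    -- construct the reduced flow graph
    have hG''acyclic : ∀ v : V, ¬ Relation.TransGen (fun u v => 0 < F u v) v v := by
      intro v hv
      exact G.acyclic v (Relation.TransGen.mono hsubE _ _ hv)
    have hG''cons : ∀ v : V, (∃ u, 0 < F u v) → (∃ w, 0 < F v w) →
        (∑ u, F u v) = (∑ w, F v w) := by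
      intro v ⟨u', hu'⟩ ⟨w', hw'⟩
      have hEin : G.E u' v := hsubE _ _ hu'
      have hEout : G.E v w' := hsubE _ _ hw'
      have hGcons : (∑ u, G.f u v) = (∑ w, G.f v w) := G.conservation v ⟨u', hEin⟩ ⟨w', hEout⟩
      have hGcons' : G.fin v = G.fout v := hGcons
      by_cases hvp : v ∈ p
      · obtain ⟨s, t, hst⟩ := List.append_of_mem hvp
        have hsne : s ≠ [] := by
          intro h; subst h
          have hsrc := hheadsrc hst
          exact hsrc u' hEin
        have htne : t ≠ [] := by
          intro h; subst h
          have hsink := hlastsink hst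
          exact hsink w' hEout
        obtain ⟨u₀, hu₀⟩ := hpredinf hst hsne
        obtain ⟨w₀, hw₀⟩ := hsuccinf hst htne
        rw [hsumin v u₀ hu₀, hsumout v w₀ hw₀, hGcons']
      · have h1 : ∀ u, ¬ [u, v] <:+: p := by
          intro u h
          exact hvp (h.subset (by simp))
        have h2 : ∀ w, ¬ [v, w] <:+: p := by
          intro w h
          exact hvp (h.subset (by simp))
        rw [hsumin' v h1, hsumout' v h2]
        exact hGcons'
    set G'' : FlowGraph V := {
      E := fun u v => 0 < F u v
      f := F
      f_pos := fun u v h => h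
      f_eq_zero := fun u v h => le_antisymm (not_lt.mp h) (hFnn u v)
      acyclic := hG''acyclic
      conservation := hG''cons } with hG''
    -- edge count decreases
    have hss : {e : V × V | G''.E e.1 e.2} ⊂ {e : V × V | G.E e.1 e.2} := by
      constructor
      · intro e he
        exact hsubE e.1 e.2 he
      · intro hcon
        have he₀' : (e₀.1, e₀.2) ∈ {e : V × V | G.E e.1 e.2} := hE₀
        have := hcon he₀'
        have hFe₀ : F e₀.1 e₀.2 = G.f e₀.1 e₀.2 - m := by
          rw [hF]; dsimp only; rw [if_pos hinf₀]
        rw [Set.mem_setOf_eq] at this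
        change 0 < F e₀.1 e₀.2 at this
        rw [hFe₀, he₀f] at this
        linarith
    have hcard : {e : V × V | G''.E e.1 e.2}.ncard ≤ n := by
      have := Set.ncard_lt_ncard hss (Set.toFinite _)
      omega
    obtain ⟨D'', hD''⟩ := ih G'' hcard
    -- source/sink transfer conditions
    have hsrc : ∀ v, (∃ w, G''.E v w) → G''.IsSource v → G.IsSource v := by
      intro v ⟨w', hw'⟩ hsrc''
      by_contra hns
      rw [IsSource] at hns
      push_neg at hns
      obtain ⟨u', hu'⟩ := hns
      have hin0 : ∑ u, F u v = 0 := by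
        apply Finset.sum_eq_zero
        intro u _
        have := hsrc'' u
        change ¬ (0 < F u v) at this
        linarith [hFnn u v]
      by_cases hvp : v ∈ p
      · obtain ⟨s, t, hst⟩ := List.append_of_mem hvp
        have hsne : s ≠ [] := by
          intro h; subst h
          exact (hheadsrc hst) u' hu'
        obtain ⟨u₀, hu₀⟩ := hpredinf hst hsne
        have htne : t ≠ [] := by
          intro h; subst h
          have hsink := hlastsink hst
          have : G.E v w' := hsubE _ _ hw'
          exact hsink w' this
        obtain ⟨w₀, hw₀⟩ := hsuccinf hst htne
        have hEu₀ : G.E u₀ v := by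
          have := hch.infix hu₀
          rwa [List.isChain_pair] at this
        have hEw₀ : G.E v w₀ := by
          have := hch.infix hw₀
          rwa [List.isChain_pair] at this
        have hGcons' : G.fin v = G.fout v := G.conservation v ⟨u₀, hEu₀⟩ ⟨w₀, hEw₀⟩
        have hi := hsumin v u₀ hu₀
        have ho := hsumout v w₀ hw₀
        -- out-sum is also zero, but F v w' > 0
        have hout0 : ∑ w, F v w = 0 := by
          rw [ho, ← hGcons', ← hi, hin0]
        have hwle : F v w' ≤ ∑ w, F v w :=
          Finset.single_le_sum (fun x _ => hFnn v x) (Finset.mem_univ w')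
        rw [hout0] at hwle
        linarith
      · have h1 : ∀ u, ¬ [u, v] <:+: p := fun u h => hvp (h.subset (by simp))
        have := hsumin' v h1
        rw [hin0] at this
        have := G.fin_pos hu'
        linarith
    have hsink : ∀ v, (∃ u, G''.E u v) → G''.IsSink v → G.IsSink v := by
      intro v ⟨u', hu'⟩ hsink''
      by_contra hns
      rw [IsSink] at hns
      push_neg at hns
      obtain ⟨w', hw'⟩ := hns
      have hout0 : ∑ w, F v w = 0 := by
        apply Finset.sum_eq_zero
        intro w _
        have := hsink'' w
        change ¬ (0 < F v w) at this
        linarith [hFnn v w]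
      by_cases hvp : v ∈ p
      · obtain ⟨s, t, hst⟩ := List.append_of_mem hvp
        have htne : t ≠ [] := by
          intro h; subst h
          exact (hlastsink hst) w' hw'
        obtain ⟨w₀, hw₀⟩ := hsuccinf hst htne
        have hsne : s ≠ [] := by
          intro h; subst h
          have hsrcv := hheadsrc hst
          have : G.E u' v := hsubE _ _ hu'
          exact hsrcv u' this
        obtain ⟨u₀, hu₀⟩ := hpredinf hst hsne
        have hEu₀ : G.E u₀ v := by
          have := hch.infix hu₀
          rwa [List.isChain_pair] at this
        have hEw₀ : G.E v w₀ := by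
          have := hch.infix hw₀
          rwa [List.isChain_pair] at this
        have hGcons' : G.fin v = G.fout v := G.conservation v ⟨u₀, hEu₀⟩ ⟨w₀, hEw₀⟩
        have hi := hsumin v u₀ hu₀
        have ho := hsumout v w₀ hw₀
        have hin0 : ∑ u, F u v = 0 := by
          rw [hi, hGcons', ← ho, hout0]
        have hule : F u' v ≤ ∑ u, F u v :=
          Finset.single_le_sum (fun x _ => hFnn x v) (Finset.mem_univ u')
        rw [hin0] at hule
        linarith
      · have h2 : ∀ w, ¬ [v, w] <:+: p := fun w h => hvp (h.subset (by simp))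
        have := hsumout' v h2
        rw [hout0] at this
        have := G.fout_pos hw'
        linarith
    -- assemble
    refine ⟨(p, m) :: D'', ⟨?_, ?_⟩⟩
    · intro Pw hPw
      rw [List.mem_cons] at hPw
      rcases hPw with rfl | hPw
      · exact ⟨hp, hmpos⟩
      · have h := hD''.1 Pw hPw
        exact ⟨ssp_transfer (fun u v h => hsubE u v h) hsrc hsink Pw.1 h.1, h.2⟩
    · intro u v hEuv
      rw [coverWeight_cons]
      have hcov'' : G.coverWeight [u, v] D'' = F u v := by
        have := G''.coverWeight_edge hD'' u v
        exact this
      rw [hcov'']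
      dsimp only
      rw [hF]
      dsimp only
      by_cases hin : [u, v] <:+: p
      · rw [if_pos hin, if_pos hin]; ring
      · rw [if_neg hin, if_neg hin]; ring

lemma exists_decomposition : ∃ D, G.IsFlowDecomposition D :=
  exists_decomposition_aux _ G (le_refl _)

end FlowGraph
end BlockD

section BlockE
namespace FlowGraph
open FGAux List
variable {V : Type} [Fintype V] [DecidableEq V] (G : FlowGraph V)

lemma head?_append_left {α : Type*} {l : List α} (h : l ≠ []) (l' : List α) :
    (l ++ l').head? = l.head? := by
  cases l with
  | nil => exact absurd rfl h
  | cons a l => rfl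

lemma getLast?_append_right' {α : Type*} (l : List α) {l' : List α} (h : l' ≠ []) :
    (l ++ l').getLast? = l'.getLast? := by
  rw [List.getLast?_append]
  cases hl : l'.getLast? with
  | none => exact absurd (List.getLast?_eq_none_iff.mp hl) h
  | some t => rfl

lemma ite_or_add {c₁ c₂ : Prop} [Decidable c₁] [Decidable c₂] (w : ℚ)
    (hnb : ¬ (c₁ ∧ c₂)) :
    (if c₁ ∨ c₂ then w else 0) = (if c₁ then w else 0) + (if c₂ then w else 0) := by
  by_cases h₁ : c₁ <;> by_cases h₂ : c₂ <;> simp [h₁, h₂]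
  exact absurd ⟨h₁, h₂⟩ hnb

lemma coverWeight_append (p : List V) (L₁ L₂ : List (List V × ℚ)) :
    G.coverWeight p (L₁ ++ L₂) = G.coverWeight p L₁ + G.coverWeight p L₂ := by
  unfold coverWeight
  rw [List.map_append, List.sum_append]

lemma coverWeight_zero_of_no_entry (p : List V) {D : List (List V × ℚ)}
    (h : ∀ R ∈ D, ¬ p <:+: R.1) : G.coverWeight p D = 0 := by
  unfold coverWeight
  rw [List.sum_eq_zero]
  intro y hy
  rw [List.mem_map] at hy
  obtain ⟨R, hR, rfl⟩ := hy
  rw [if_neg (h R hR)]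

lemma divert_terminal {q' : List V} {v b : V} (hv : q'.getLast? = some v)
    (hEvb : G.E v b) {D : List (List V × ℚ)} (hD : G.IsFlowDecomposition D)
    (hnodiv : ∀ R ∈ D, (∃ x, ¬ x = b ∧ [v, x] <:+: R.1) → q' <:+: R.1) :
    G.coverWeight (q' ++ [b]) D + (G.fout v - G.f v b) ≤ G.coverWeight q' D := by
  obtain ⟨q'', hq''⟩ := List.getLast?_eq_some_iff.mp hv
  have hvbq : [v, b] <:+: q' ++ [b] := ⟨q'', [], by rw [hq'']; simp⟩
  have hq'q : q' <:+: q' ++ [b] := ⟨[], [b], by simp⟩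
  have hout : G.fout v - G.f v b = ∑ x ∈ Finset.univ.erase b, G.coverWeight [v, x] D := by
    rw [Finset.sum_congr rfl (fun x _ => G.coverWeight_edge hD v x)]
    rw [G.sum_erase_eq v b]
  rw [hout]
  -- sum the per-entry inequality
  have hDall := hD.1
  clear hD hout
  induction D with
  | nil => simp [coverWeight]
  | cons R D ih =>
    have hR := hDall R mem_cons_self
    have hrest := ih (fun S hS h => hnodiv S (mem_cons_of_mem _ hS) h)
      (fun S hS => hDall S (mem_cons_of_mem _ hS))
    rw [coverWeight_cons, coverWeight_cons]
    have hsplit : ∑ x ∈ Finset.univ.erase b, G.coverWeight [v, x] (R :: D)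
        = (∑ x ∈ Finset.univ.erase b, (if [v, x] <:+: R.1 then R.2 else 0))
          + ∑ x ∈ Finset.univ.erase b, G.coverWeight [v, x] D := by
      rw [← Finset.sum_add_distrib]
      exact Finset.sum_congr rfl (fun x _ => by rw [coverWeight_cons])
    rw [hsplit]
    have hndR : R.1.Nodup := G.path_nodup hR.1.1.2
    -- per-entry bound
    have hentry : (if (q' ++ [b]) <:+: R.1 then R.2 else 0)
        + (∑ x ∈ Finset.univ.erase b, (if [v, x] <:+: R.1 then R.2 else 0))
        ≤ (if q' <:+: R.1 then R.2 else 0) := by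
      by_cases hex : ∃ x, ¬ x = b ∧ [v, x] <:+: R.1
      · obtain ⟨x₀, hx₀b, hx₀⟩ := hex
        have hq'R : q' <:+: R.1 := hnodiv R mem_cons_self ⟨x₀, hx₀b, hx₀⟩
        have hqR : ¬ (q' ++ [b]) <:+: R.1 := by
          intro h
          exact hx₀b (FGAux.succ_unique hndR hx₀ (hvbq.trans h))
        rw [if_neg hqR, if_pos hq'R]
        have hsum : ∑ x ∈ Finset.univ.erase b, (if [v, x] <:+: R.1 then R.2 else 0) = R.2 := by
          rw [Finset.sum_eq_single x₀]
          · rw [if_pos hx₀]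
          · intro x hx hne
            rw [if_neg]
            intro hinf
            exact hne (FGAux.succ_unique hndR hinf hx₀)
          · intro hx
            exact absurd (Finset.mem_erase.mpr ⟨hx₀b, Finset.mem_univ x₀⟩) hx
        rw [hsum]
        linarith
      · push_neg at hex
        have hsum : ∑ x ∈ Finset.univ.erase b, (if [v, x] <:+: R.1 then R.2 else 0) = 0 := by
          apply Finset.sum_eq_zero
          intro x hx
          rw [if_neg (hex x (Finset.mem_erase.mp hx).1)]
        rw [hsum, add_zero]
        by_cases hqR : (q' ++ [b]) <:+: R.1
        · rw [if_pos hqR, if_pos (hq'q.trans hqR)]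
        · rw [if_neg hqR]
          exact ite_nonneg' hR.2.le
    linarith

lemma divert {q' : List V} {v b : V} (hq'len : 2 ≤ q'.length)
    (hv : q'.getLast? = some v) (hEvb : G.E v b) :
    ∀ (n : ℕ) (D : List (List V × ℚ)),
      D.countP (fun R => decide ((q' ++ [b]) <:+: R.1 ∨
        ((∃ x, ¬ x = b ∧ [v, x] <:+: R.1) ∧ ¬ q' <:+: R.1))) ≤ n →
      G.IsFlowDecomposition D →
      ∃ D₂, G.IsFlowDecomposition D₂ ∧
        G.coverWeight (q' ++ [b]) D₂
          ≤ max (G.coverWeight q' D - (G.fout v - G.f v b)) 0 := by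
  intro n
  induction n with
  | zero =>
    intro D hμ hD
    refine ⟨D, hD, ?_⟩
    have h0 : G.coverWeight (q' ++ [b]) D = 0 := by
      apply G.coverWeight_zero_of_no_entry
      intro R hR hinf
      have : 0 < D.countP (fun R => decide ((q' ++ [b]) <:+: R.1 ∨
          ((∃ x, ¬ x = b ∧ [v, x] <:+: R.1) ∧ ¬ q' <:+: R.1))) := by
        rw [List.countP_pos_iff]
        exact ⟨R, hR, by simp only [decide_eq_true_eq]; exact Or.inl hinf⟩
      omega
    rw [h0]
    exact le_max_right _ _
  | succ n ih =>
    intro D hμ hD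
    by_cases hA : ∃ A ∈ D, (q' ++ [b]) <:+: A.1
    swap
    · refine ⟨D, hD, ?_⟩
      push_neg at hA
      rw [G.coverWeight_zero_of_no_entry _ hA]
      exact le_max_right _ _
    by_cases hB : ∃ B ∈ D, (∃ x, ¬ x = b ∧ [v, x] <:+: B.1) ∧ ¬ q' <:+: B.1
    swap
    · refine ⟨D, hD, ?_⟩
      push_neg at hB
      have hterm := G.divert_terminal hv hEvb hD (fun R hR hex => hB R hR hex)
      have := le_max_left (G.coverWeight q' D - (G.fout v - G.f v b)) (0:ℚ)
      linarith
    -- THE SWAP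
    obtain ⟨A, hAmem, hAq⟩ := hA
    obtain ⟨B, hBmem, ⟨⟨x, hxb, hvxB⟩, hq'B⟩⟩ := hB
    have hq'q : q' <:+: q' ++ [b] := ⟨[], [b], by simp⟩
    have hq'A : q' <:+: A.1 := hq'q.trans hAq
    have hAB : A ≠ B := fun h => hq'B (h ▸ hq'A)
    obtain ⟨D₀, hperm⟩ := FGAux.two_mem_perm hAmem hBmem hAB
    have hD₀sub : ∀ R ∈ D₀, R ∈ D := by
      intro R hR
      exact hperm.mem_iff.mpr (List.mem_cons_of_mem _ (List.mem_cons_of_mem _ hR))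
    have hAss := hD.1 A hAmem
    have hBss := hD.1 B hBmem
    have hndA : A.1.Nodup := G.path_nodup hAss.1.1.2
    have hndB : B.1.Nodup := G.path_nodup hBss.1.1.2
    obtain ⟨q'', hq''⟩ := List.getLast?_eq_some_iff.mp hv
    have hq''ne : q'' ≠ [] := by
      intro h
      rw [h] at hq''
      rw [hq''] at hq'len
      simp at hq'len
    obtain ⟨sA, tA, hA1⟩ := hAq
    obtain ⟨sB, tB, hB1⟩ := hvxB
    set A₁ := sA ++ q'' with hA₁
    set A₂ := b :: tA with hA₂
    set B₁ := sB with hB₁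
    set B₂ := x :: tB with hB₂
    have hA1' : A.1 = A₁ ++ v :: A₂ := by
      rw [← hA1, hq'', hA₁, hA₂]
      simp
    have hB1' : B.1 = B₁ ++ v :: B₂ := by
      rw [← hB1, hB₁, hB₂]
      simp
    have hA₁ne : A₁ ≠ [] := by
      rw [hA₁]
      intro h
      rcases List.append_eq_nil_iff.mp h with ⟨-, h2⟩
      exact hq''ne h2
    have hvA₁ : v ∉ A₁ := (nodup_of_eq_append_cons hndA hA1').1
    have hvA₂ : v ∉ A₂ := (nodup_of_eq_append_cons hndA hA1').2
    have hvB₁ : v ∉ B₁ := (nodup_of_eq_append_cons hndB hB1').1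
    have hvB₂ : v ∉ B₂ := (nodup_of_eq_append_cons hndB hB1').2
    set X := (A₁ ++ [v]) ++ B₂ with hX
    set Y := (B₁ ++ [v]) ++ A₂ with hY
    have hXalt : X = A₁ ++ v :: B₂ := by rw [hX]; simp
    have hYalt : Y = B₁ ++ v :: A₂ := by rw [hY]; simp
    set t := min A.2 B.2 with ht
    have htpos : 0 < t := lt_min hAss.2 hBss.2
    have htA : t ≤ A.2 := min_le_left _ _
    have htB : t ≤ B.2 := min_le_right _ _
    -- chains
    have hchA₁v : List.Chain' G.E (A₁ ++ [v]) :=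
      hAss.1.1.2.infix ⟨[], A₂, by rw [hA1']; simp⟩
    have hchB₁v : List.Chain' G.E (B₁ ++ [v]) :=
      hBss.1.1.2.infix ⟨[], B₂, by rw [hB1']; simp⟩
    have hchvA₂ : List.Chain' G.E (v :: A₂) :=
      hAss.1.1.2.infix ⟨A₁, [], by rw [hA1']; simp⟩
    have hchvB₂ : List.Chain' G.E (v :: B₂) :=
      hBss.1.1.2.infix ⟨B₁, [], by rw [hB1']; simp⟩
    have hndvA₂ : (v :: A₂).Nodup := G.path_nodup hchvA₂
    have hndvB₂ : (v :: B₂).Nodup := G.path_nodup hchvB₂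
    have hEvx : G.E v x := by
      have := hchvB₂
      rw [hB₂, List.Chain', List.isChain_cons_cons] at this
      exact this.1
    have hEvb' : G.E v b := hEvb
    have hchX : List.Chain' G.E X := by
      rw [hX]
      refine List.IsChain.append hchA₁v (hchvB₂.tail) ?_
      intro x_ hx_ y_ hy_
      rw [List.getLast?_concat] at hx_
      rw [hB₂] at hy_
      simp only [Option.mem_def, Option.some.injEq, List.head?_cons] at hx_ hy_
      rw [← hx_, ← hy_]
      exact hEvx
    have hchY : List.Chain' G.E Y := by
      rw [hY]
      refine List.IsChain.append hchB₁v (hchvA₂.tail) ?_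
      intro x_ hx_ y_ hy_
      rw [List.getLast?_concat] at hx_
      rw [hA₂] at hy_
      simp only [Option.mem_def, Option.some.injEq, List.head?_cons] at hx_ hy_
      rw [← hx_, ← hy_]
      exact hEvb'
    have hndX : X.Nodup := G.path_nodup hchX
    have hndY : Y.Nodup := G.path_nodup hchY
    have hB₂ne : B₂ ≠ [] := by rw [hB₂]; simp
    have hA₂ne : A₂ ≠ [] := by rw [hA₂]; simp
    -- infix bookkeeping
    have hq'sufA : q' <:+ A₁ ++ [v] := ⟨sA, by rw [hq'', hA₁]; simp⟩
    have hq'X : q' <:+: X := by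
      rw [hX]
      exact hq'sufA.isInfix.trans (⟨[], B₂, by simp⟩ : (A₁ ++ [v]) <:+: (A₁ ++ [v]) ++ B₂)
    have hvbq : [v, b] <:+: q' ++ [b] := ⟨q'', [], by rw [hq'']; simp⟩
    have hvxB2 : [v, x] <:+: v :: B₂ := ⟨[], tB, by rw [hB₂]; simp⟩
    have hvbA2 : [v, b] <:+: v :: A₂ := ⟨[], tA, by rw [hA₂]; simp⟩
    have hqX : ¬ (q' ++ [b]) <:+: X := by
      intro h
      have hvb : [v, b] <:+: X := hvbq.trans h
      rw [hXalt] at hvb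
      rcases FGAux.infix_pair_split.mp hvb with h1 | h1
      · exact FGAux.not_pair_infix_append_last hvA₁ h1
      · exact hxb (FGAux.succ_unique hndvB₂ hvxB2 h1)
    have hq'Yn : ¬ q' <:+: Y := by
      intro h
      rw [hYalt] at h
      have hndY' : (B₁ ++ v :: A₂).Nodup := hYalt ▸ hndY
      have hsuf := FGAux.infix_suffix_of_getLast hndY' h hv
      have : q' <:+: B.1 := by
        rw [hB1']
        exact hsuf.isInfix.trans (⟨[], B₂, by simp⟩ : (B₁ ++ [v]) <:+: B₁ ++ v :: B₂)
      exact hq'B this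
    have hqY : ¬ (q' ++ [b]) <:+: Y := fun h => hq'Yn (hq'q.trans h)
    have hqB : ¬ (q' ++ [b]) <:+: B.1 := fun h => hq'B (hq'q.trans h)
    have hdivY : ¬ ∃ x', ¬ x' = b ∧ [v, x'] <:+: Y := by
      rintro ⟨x', hx'b, hx'⟩
      rw [hYalt] at hx'
      rcases FGAux.infix_pair_split.mp hx' with h1 | h1
      · exact FGAux.not_pair_infix_append_last hvB₁ h1
      · exact hx'b (FGAux.succ_unique hndvA₂ h1 hvbA2)
    -- head/last transfer
    have hheadX : X.head? = A.1.head? := by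
      rw [hX, hA1', List.append_assoc]
      rw [head?_append_left hA₁ne, head?_append_left hA₁ne]
    have hlastX : X.getLast? = B.1.getLast? := by
      rw [hX, hB1', getLast?_append_right' _ hB₂ne,
        show B₁ ++ v :: B₂ = (B₁ ++ [v]) ++ B₂ by simp,
        getLast?_append_right' _ hB₂ne]
    have hheadY : Y.head? = B.1.head? := by
      rw [hY, hB1', List.append_assoc, List.head?_append, List.head?_append,
        show (B₁ ++ v :: B₂).head? = B₁.head?.or ((v :: B₂).head?) from List.head?_append]
      rfl
    have hlastY : Y.getLast? = A.1.getLast? := by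
      rw [hY, hA1', getLast?_append_right' _ hA₂ne,
        show A₁ ++ v :: A₂ = (A₁ ++ [v]) ++ A₂ by simp,
        getLast?_append_right' _ hA₂ne]
    have hsspX : G.IsSourceSinkPath X := by
      refine ⟨⟨?_, hchX⟩, ?_, ?_⟩
      · rw [hX, List.length_append, List.length_append, hB₂]
        simp
        omega
      · intro s hs
        exact hAss.1.2.1 s (hheadX ▸ hs)
      · intro tt htt
        exact hBss.1.2.2 tt (hlastX ▸ htt)
    have hsspY : G.IsSourceSinkPath Y := by
      refine ⟨⟨?_, hchY⟩, ?_, ?_⟩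
      · rw [hY, List.length_append, List.length_append, hA₂]
        simp
        omega
      · intro s hs
        exact hBss.1.2.1 s (hheadY ▸ hs)
      · intro tt htt
        exact hAss.1.2.2 tt (hlastY ▸ htt)
    -- new decomposition
    set wA' := A.2 - t with hwA'
    set wB' := B.2 - t with hwB'
    have hwA'nn : 0 ≤ wA' := by rw [hwA']; linarith
    have hwB'nn : 0 ≤ wB' := by rw [hwB']; linarith
    set D₁ := (X, t) :: (Y, t) :: ((if 0 < wA' then [(A.1, wA')] else [])
      ++ ((if 0 < wB' then [(B.1, wB')] else []) ++ D₀)) with hD₁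
    have hcovOptA : ∀ p : List V, G.coverWeight p (if 0 < wA' then [(A.1, wA')] else [])
        = (if p <:+: A.1 then wA' else 0) := by
      intro p
      by_cases h : 0 < wA'
      · rw [if_pos h]
        simp [coverWeight]
      · rw [if_neg h]
        have h0 : wA' = 0 := le_antisymm (not_lt.mp h) hwA'nn
        simp [coverWeight, h0]
    have hcovOptB : ∀ p : List V, G.coverWeight p (if 0 < wB' then [(B.1, wB')] else [])
        = (if p <:+: B.1 then wB' else 0) := by
      intro p
      by_cases h : 0 < wB'
      · rw [if_pos h]
        simp [coverWeight]
      · rw [if_neg h]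
        have h0 : wB' = 0 := le_antisymm (not_lt.mp h) hwB'nn
        simp [coverWeight, h0]
    have hcovD₁ : ∀ p : List V, G.coverWeight p D₁
        = (if p <:+: X then t else 0) + (if p <:+: Y then t else 0)
          + (if p <:+: A.1 then wA' else 0) + (if p <:+: B.1 then wB' else 0)
          + G.coverWeight p D₀ := by
      intro p
      rw [hD₁, coverWeight_cons, coverWeight_cons, coverWeight_append, coverWeight_append,
        hcovOptA p, hcovOptB p]
      ring
    have hcovD : ∀ p : List V, G.coverWeight p D
        = (if p <:+: A.1 then A.2 else 0) + (if p <:+: B.1 then B.2 else 0)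
          + G.coverWeight p D₀ := by
      intro p
      rw [G.coverWeight_perm p hperm, coverWeight_cons, coverWeight_cons]
      ring
    have hD₁decomp : G.IsFlowDecomposition D₁ := by
      constructor
      · intro Pw hPw
        rw [hD₁, List.mem_cons, List.mem_cons, List.mem_append, List.mem_append] at hPw
        rcases hPw with rfl | rfl | h | h | h
        · exact ⟨hsspX, htpos⟩
        · exact ⟨hsspY, htpos⟩
        · by_cases h' : 0 < wA'
          · rw [if_pos h'] at h
            rw [List.mem_singleton] at h
            subst h
            exact ⟨hAss.1, h'⟩
          · rw [if_neg h'] at h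
            simp at h
        · by_cases h' : 0 < wB'
          · rw [if_pos h'] at h
            rw [List.mem_singleton] at h
            subst h
            exact ⟨hBss.1, h'⟩
          · rw [if_neg h'] at h
            simp at h
        · exact hD.1 Pw (hD₀sub Pw h)
      · intro u w hEuw
        have hgoal := hD.2 u w hEuw
        rw [hcovD [u, w]] at hgoal
        rw [hcovD₁ [u, w]]
        -- indicator split facts
        have hndA' : (A₁ ++ v :: A₂).Nodup := hA1' ▸ hndA
        have hndB' : (B₁ ++ v :: B₂).Nodup := hB1' ▸ hndB
        have hndX' : (A₁ ++ v :: B₂).Nodup := hXalt ▸ hndX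
        have hndY' : (B₁ ++ v :: A₂).Nodup := hYalt ▸ hndY
        have hAiff : ([u, w] <:+: A.1) ↔ ([u, w] <:+: A₁ ++ [v] ∨ [u, w] <:+: v :: A₂) := by
          rw [hA1']
          exact FGAux.infix_pair_split
        have hBiff : ([u, w] <:+: B.1) ↔ ([u, w] <:+: B₁ ++ [v] ∨ [u, w] <:+: v :: B₂) := by
          rw [hB1']
          exact FGAux.infix_pair_split
        have hXiff : ([u, w] <:+: X) ↔ ([u, w] <:+: A₁ ++ [v] ∨ [u, w] <:+: v :: B₂) := by
          rw [hXalt]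
          exact FGAux.infix_pair_split
        have hYiff : ([u, w] <:+: Y) ↔ ([u, w] <:+: B₁ ++ [v] ∨ [u, w] <:+: v :: A₂) := by
          rw [hYalt]
          exact FGAux.infix_pair_split
        by_cases hpA1 : [u, w] <:+: A₁ ++ [v] <;>
          by_cases hpA2 : [u, w] <:+: v :: A₂ <;>
          by_cases hpB1 : [u, w] <:+: B₁ ++ [v] <;>
          by_cases hpB2 : [u, w] <:+: v :: B₂ <;>
          first
          | exact (FGAux.infix_pair_not_both hndA' hpA1 hpA2).elim
          | exact (FGAux.infix_pair_not_both hndB' hpB1 hpB2).elim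
          | exact (FGAux.infix_pair_not_both hndX' hpA1 hpB2).elim
          | exact (FGAux.infix_pair_not_both hndY' hpB1 hpA2).elim
          | (simp only [hAiff, hBiff, hXiff, hYiff, hpA1, hpA2, hpB1, hpB2,
              or_self, or_true, true_or, or_false, false_or, if_true, if_false,
              iff_true, iff_false] at hgoal ⊢
             try linarith)
    -- measure decreases
    have hpredX : (fun R : List V × ℚ => decide ((q' ++ [b]) <:+: R.1 ∨
        ((∃ x, ¬ x = b ∧ [v, x] <:+: R.1) ∧ ¬ q' <:+: R.1))) (X, t) = false := by
      apply decide_eq_false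
      rintro (h | ⟨-, hq'n⟩)
      · exact hqX h
      · exact hq'n hq'X
    have hpredY : (fun R : List V × ℚ => decide ((q' ++ [b]) <:+: R.1 ∨
        ((∃ x, ¬ x = b ∧ [v, x] <:+: R.1) ∧ ¬ q' <:+: R.1))) (Y, t) = false := by
      apply decide_eq_false
      rintro (h | ⟨hdiv, -⟩)
      · exact hqY h
      · exact hdivY hdiv
    have hpredA : (fun R : List V × ℚ => decide ((q' ++ [b]) <:+: R.1 ∨
        ((∃ x, ¬ x = b ∧ [v, x] <:+: R.1) ∧ ¬ q' <:+: R.1))) A = true := by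
      apply decide_eq_true
      exact Or.inl ⟨sA, tA, hA1⟩
    have hpredB : (fun R : List V × ℚ => decide ((q' ++ [b]) <:+: R.1 ∨
        ((∃ x, ¬ x = b ∧ [v, x] <:+: R.1) ∧ ¬ q' <:+: R.1))) B = true := by
      apply decide_eq_true
      exact Or.inr ⟨⟨x, hxb, hvxB2.trans (⟨B₁, [], by rw [hB1']; simp⟩ : (v :: B₂) <:+: B.1)⟩, hq'B⟩
    have hμD : D.countP (fun R : List V × ℚ => decide ((q' ++ [b]) <:+: R.1 ∨
        ((∃ x, ¬ x = b ∧ [v, x] <:+: R.1) ∧ ¬ q' <:+: R.1)))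
        = D₀.countP (fun R : List V × ℚ => decide ((q' ++ [b]) <:+: R.1 ∨
        ((∃ x, ¬ x = b ∧ [v, x] <:+: R.1) ∧ ¬ q' <:+: R.1))) + 2 := by
      rw [hperm.countP_eq]
      simp only [List.countP_cons, hpredA, hpredB, if_true]
    have hoptle : (List.countP (fun R : List V × ℚ => decide ((q' ++ [b]) <:+: R.1 ∨
          ((∃ x, ¬ x = b ∧ [v, x] <:+: R.1) ∧ ¬ q' <:+: R.1)))
          (if 0 < wA' then [(A.1, wA')] else []))
        + (List.countP (fun R : List V × ℚ => decide ((q' ++ [b]) <:+: R.1 ∨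
          ((∃ x, ¬ x = b ∧ [v, x] <:+: R.1) ∧ ¬ q' <:+: R.1)))
          (if 0 < wB' then [(B.1, wB')] else [])) ≤ 1 := by
      rcases le_total A.2 B.2 with hmin | hmin
      · have : wA' = 0 := by rw [hwA', ht, min_eq_left hmin]; ring
        rw [this]
        simp only [lt_self_iff_false, if_false, List.countP_nil, zero_add]
        calc List.countP _ _ ≤ (if 0 < wB' then [(B.1, wB')] else []).length :=
              List.countP_le_length
          _ ≤ 1 := by split <;> simp
      · have : wB' = 0 := by rw [hwB', ht, min_eq_right hmin]; ring
        rw [this]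
        simp only [lt_self_iff_false, if_false, List.countP_nil, add_zero]
        calc List.countP _ _ ≤ (if 0 < wA' then [(A.1, wA')] else []).length :=
              List.countP_le_length
          _ ≤ 1 := by split <;> simp
    have hμD₁ : D₁.countP (fun R : List V × ℚ => decide ((q' ++ [b]) <:+: R.1 ∨
        ((∃ x, ¬ x = b ∧ [v, x] <:+: R.1) ∧ ¬ q' <:+: R.1))) ≤ n := by
      have hcount : (D₀.countP (fun R : List V × ℚ => decide ((q' ++ [b]) <:+: R.1 ∨
          ((∃ x, ¬ x = b ∧ [v, x] <:+: R.1) ∧ ¬ q' <:+: R.1)))) + 2 ≤ n + 1 := by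
        rw [← hμD]
        exact hμ
      rw [hD₁]
      simp only [List.countP_cons, List.countP_append, hpredX, hpredY,
        Bool.false_eq_true, if_false]
      omega
    obtain ⟨D₂, hD₂, hcov₂⟩ := ih D₁ hμD₁ hD₁decomp
    refine ⟨D₂, hD₂, ?_⟩
    have hq'eq : G.coverWeight q' D₁ = G.coverWeight q' D := by
      rw [hcovD₁ q', hcovD q']
      rw [if_pos hq'X, if_neg hq'Yn, if_pos hq'A, if_neg hq'B, if_pos hq'A, if_neg hq'B]
      rw [hwA']
      ring
    rw [hq'eq] at hcov₂
    exact hcov₂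

end FlowGraph
end BlockE

section BlockF
namespace FlowGraph
open FGAux List
variable {V : Type} [Fintype V] [DecidableEq V] (G : FlowGraph V)

lemma exists_min_cover : ∀ (n : ℕ) (q : List V), q.length ≤ n → 2 ≤ q.length →
    q.Chain' G.E →
    ∃ D, G.IsFlowDecomposition D ∧ G.coverWeight q D ≤ max (G.excess q) 0 := by
  intro n
  induction n with
  | zero => intro q h1 h2 _; omega
  | succ n ih =>
    intro q hlen h2 hc
    rcases eq_or_lt_of_le h2 with h2' | h3
    · match q, h2'.symm with
      | [u, w], _ =>
        obtain ⟨D, hD⟩ := G.exists_decomposition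
        refine ⟨D, hD, ?_⟩
        rw [G.coverWeight_edge hD, G.excess_pair]
        exact le_max_left _ _
    · rcases List.eq_nil_or_concat q with rfl | ⟨q', bb, rfl⟩
      · simp at h2
      rw [List.concat_eq_append] at *
      have hq'len : 2 ≤ q'.length := by
        rw [List.length_append] at h3
        simp at h3
        omega
      have hq'ne : q' ≠ [] := by intro h; subst h; simp at hq'len
      obtain ⟨v, hv⟩ : ∃ v, q'.getLast? = some v := by
        cases hg : q'.getLast? with
        | none => exact absurd (List.getLast?_eq_none_iff.mp hg) hq'ne
        | some v => exact ⟨v, rfl⟩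
      rw [List.Chain', List.isChain_append] at hc
      have hEvb : G.E v bb := hc.2.2 v hv bb rfl
      have hc' : q'.Chain' G.E := hc.1
      obtain ⟨D', hD', hcov'⟩ := ih q'
        (by rw [List.length_append] at hlen; simp at hlen; omega) hq'len hc'
      obtain ⟨D₂, hD₂, hcov₂⟩ := G.divert hq'len hv hEvb
        (D'.countP (fun R => decide ((q' ++ [bb]) <:+: R.1 ∨
          ((∃ x, ¬ x = bb ∧ [v, x] <:+: R.1) ∧ ¬ q' <:+: R.1)))) D' (le_refl _) hD'
      refine ⟨D₂, hD₂, ?_⟩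
      have hout0 : 0 ≤ G.fout v - G.f v bb := by
        have := G.sum_erase_eq v bb
        have hnn : 0 ≤ ∑ x ∈ Finset.univ.erase bb, G.f v x :=
          Finset.sum_nonneg (fun x _ => G.f_nonneg v x)
        linarith
      have hmax : max (G.coverWeight q' D' - (G.fout v - G.f v bb)) 0
          ≤ max (G.excess (q' ++ [bb])) 0 := by
        rw [G.excess_snoc bb hq'len hv]
        rcases le_total (G.coverWeight q' D' - (G.fout v - G.f v bb)) 0 with h | h
        · rw [max_eq_right h]
          exact le_max_right _ _
        · rw [max_eq_left h]
          have hle : G.coverWeight q' D' ≤ max (G.excess q') 0 := hcov'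
          rcases le_total (G.excess q') 0 with h' | h'
          · rw [max_eq_right h'] at hle
            have : G.coverWeight q' D' - (G.fout v - G.f v bb) ≤ 0 := by linarith
            have h0 : G.coverWeight q' D' - (G.fout v - G.f v bb) = 0 := le_antisymm this h
            rw [h0]
            exact le_max_right _ _
          · rw [max_eq_left h'] at hle
            have : G.coverWeight q' D' - (G.fout v - G.f v bb)
                ≤ G.excess q' - (G.fout v - G.f v bb) := by linarith
            exact le_trans this (le_max_left _ _)
      exact le_trans hcov₂ hmax

lemma isSafe_iff {q : List V} (h2 : 2 ≤ q.length) (hc : q.Chain' G.E) :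
    G.IsSafe q ↔ 0 < G.excess q := by
  constructor
  · rintro ⟨-, w, hw, hsafe⟩
    by_contra hcon
    push_neg at hcon
    obtain ⟨D, hD, hcov⟩ := G.exists_min_cover q.length q (le_refl _) h2 hc
    rw [max_eq_right hcon] at hcov
    have := hsafe D hD
    linarith
  · intro hpos
    exact ⟨⟨h2, hc⟩, G.excess q, hpos, fun D hD =>
      G.excess_le_cover q.length q (le_refl _) h2 hc D hD⟩

end FlowGraph
end BlockF

section BlockG
namespace FlowGraph
open FGAux List
variable {V : Type} [Fintype V] [DecidableEq V]

def op (G : FlowGraph V) : FlowGraph V where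
  E u v := G.E v u
  f u v := G.f v u
  f_pos u v h := G.f_pos v u h
  f_eq_zero u v h := G.f_eq_zero v u h
  acyclic v h := G.acyclic v (by
    rwa [show (fun u v => G.E v u) = Function.swap G.E from rfl,
      Relation.transGen_swap] at h)
  conservation v h1 h2 := (G.conservation v h2 h1).symm

lemma op_op (G : FlowGraph V) : G.op.op = G := rfl

lemma op_f (G : FlowGraph V) (u v : V) : G.op.f u v = G.f v u := rfl

lemma op_fout (G : FlowGraph V) (v : V) : G.op.fout v = G.fin v := rfl

def revD (D : List (List V × ℚ)) : List (List V × ℚ) :=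
  D.map (fun R => (R.1.reverse, R.2))

lemma coverWeight_rev (G : FlowGraph V) (p : List V) (D : List (List V × ℚ)) :
    G.op.coverWeight p.reverse (revD D) = G.coverWeight p D := by
  unfold coverWeight revD
  rw [List.map_map]
  congr 1
  apply List.map_congr_left
  intro R _
  show (if p.reverse <:+: R.1.reverse then R.2 else 0) = (if p <:+: R.1 then R.2 else 0)
  rw [if_congr List.reverse_infix rfl rfl]

lemma isFlowDecomposition_rev (G : FlowGraph V) {D : List (List V × ℚ)}
    (hD : G.IsFlowDecomposition D) : G.op.IsFlowDecomposition (revD D) := by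
  constructor
  · intro Pw hPw
    rw [revD, List.mem_map] at hPw
    obtain ⟨R, hR, rfl⟩ := hPw
    have h := hD.1 R hR
    refine ⟨⟨⟨by simpa using h.1.1.1, ?_⟩, ?_, ?_⟩, h.2⟩
    · rw [List.Chain', List.isChain_reverse]
      exact h.1.1.2
    · intro s hs
      rw [List.head?_reverse] at hs
      exact fun u hu => h.1.2.2 s hs u hu
    · intro t ht
      rw [List.getLast?_reverse] at ht
      exact fun u hu => h.1.2.1 t ht u hu
  · intro u v hE
    have h1 : G.op.coverWeight [u, v] (revD D) = G.coverWeight [v, u] D := by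
      rw [show ([u, v] : List V) = ([v, u] : List V).reverse from rfl]
      exact coverWeight_rev G [v, u] D
    rw [h1]
    exact hD.2 v u hE

lemma isSafe_rev (G : FlowGraph V) {q : List V} (h : G.IsSafe q) :
    G.op.IsSafe q.reverse := by
  obtain ⟨⟨h2, hc⟩, w, hw, hsafe⟩ := h
  refine ⟨⟨by simpa using h2, by rw [List.Chain', List.isChain_reverse]; exact hc⟩, w, hw, ?_⟩
  intro D' hD'
  have hrev : G.IsFlowDecomposition (revD D') := by
    have := isFlowDecomposition_rev G.op hD'
    rwa [op_op] at this
  have hkey := coverWeight_rev G.op q.reverse D'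
  rw [op_op, List.reverse_reverse] at hkey
  rw [← hkey]
  exact hsafe (revD D') hrev

lemma isSafe_rev_iff (G : FlowGraph V) (q : List V) :
    G.IsSafe q ↔ G.op.IsSafe q.reverse := by
  constructor
  · exact isSafe_rev G
  · intro h
    have := isSafe_rev G.op h
    rwa [op_op, List.reverse_reverse] at this

lemma excess_rev (G : FlowGraph V) : ∀ (n : ℕ) (q : List V), q.length ≤ n →
    2 ≤ q.length → q.Chain' G.E → G.op.excess q.reverse = G.excess q := by
  intro n
  induction n with
  | zero => intro q h1 h2 _; omega
  | succ n ih =>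
    intro q hlen h2 hc
    rcases eq_or_lt_of_le h2 with h2' | h3
    · match q, h2'.symm with
      | [u, w], _ =>
        show G.op.excess [w, u] = G.excess [u, w]
        rw [G.op.excess_pair, G.excess_pair, op_f]
    · rcases List.eq_nil_or_concat q with rfl | ⟨q', bb, rfl⟩
      · simp at h2
      rw [List.concat_eq_append] at *
      have hq'len : 2 ≤ q'.length := by
        rw [List.length_append] at h3
        simp at h3
        omega
      have hq'ne : q' ≠ [] := by intro h; subst h; simp at hq'len
      obtain ⟨v, hv⟩ : ∃ v, q'.getLast? = some v := by
        cases hg : q'.getLast? with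
        | none => exact absurd (List.getLast?_eq_none_iff.mp hg) hq'ne
        | some v => exact ⟨v, rfl⟩
      rw [List.Chain', List.isChain_append] at hc
      have hEvb : G.E v bb := hc.2.2 v hv bb rfl
      have hc' : q'.Chain' G.E := hc.1
      have hIH := ih q' (by rw [List.length_append] at hlen; simp at hlen; omega) hq'len hc'
      -- conservation at v
      obtain ⟨q'', hq''⟩ := List.getLast?_eq_some_iff.mp hv
      have hq''ne : q'' ≠ [] := by
        intro h
        rw [h] at hq''
        rw [hq''] at hq'len
        simp at hq'len
      obtain ⟨u₀, hu₀⟩ : ∃ u₀, q''.getLast? = some u₀ := by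
        cases hg : q''.getLast? with
        | none => exact absurd (List.getLast?_eq_none_iff.mp hg) hq''ne
        | some u₀ => exact ⟨u₀, rfl⟩
      have hEu₀v : G.E u₀ v := by
        have := hc'
        rw [hq'', List.Chain', List.isChain_append] at this
        exact this.2.2 u₀ hu₀ v rfl
      have hcons : G.fin v = G.fout v := G.conservation v ⟨u₀, hEu₀v⟩ ⟨bb, hEvb⟩
      -- reverse decomposition
      have hrev : (q' ++ [bb]).reverse = bb :: q'.reverse := by simp
      have hrevlen : 2 ≤ q'.reverse.length := by simpa using hq'len
      have hrevhead : q'.reverse.head? = some v := by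
        rw [List.head?_reverse]
        exact hv
      obtain ⟨w₁, hw₁⟩ : ∃ w₁, q'.reverse.tail.head? = some w₁ := by
        match hqq : q'.reverse, hrevlen with
        | c0 :: c1 :: rest, _ => exact ⟨c1, rfl⟩
      have hcons' := G.op.excess_cons (p := q'.reverse) bb hrevhead hw₁
      rw [hrev, hcons', hIH, G.excess_snoc bb hq'len hv]
      rw [op_f, op_fout]
      linarith

end FlowGraph
end BlockG

section BlockH
namespace FlowGraph
open FGAux List
variable {V : Type} [Fintype V] [DecidableEq V] (G : FlowGraph V)

lemma extend_safe_iff {p : List V} {u : V} (hp : G.IsSafe p)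
    (hu : p.getLast? = some u) {z : V} (hEz : G.E u z) :
    G.IsSafe (p ++ [z]) ↔ 0 < G.excess p - (G.fout u - G.f u z) := by
  have h2 : 2 ≤ p.length := hp.1.1
  have hc : p.Chain' G.E := hp.1.2
  have hcz : (p ++ [z]).Chain' G.E := by
    refine List.IsChain.append hc (List.isChain_singleton z) ?_
    intro a ha y hy
    rw [Option.mem_def] at ha hy
    rw [hu, Option.some.injEq] at ha
    rw [List.head?_cons, Option.some.injEq] at hy
    rw [ha, hy] at hEz
    exact hEz
  have hlen : 2 ≤ (p ++ [z]).length := by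
    rw [List.length_append]
    omega
  rw [G.isSafe_iff hlen hcz, G.excess_snoc z h2 hu]

end FlowGraph
end BlockH

open FlowGraph in
/-- for a safe path `P` ending at a non-sink `u` with maximum-flow outgoing
edge `e* = (u,y)`: some extension `P·e` is safe iff `P·e*` is safe iff
`f_P − (f_out(u) − f(e*)) > 0`; symmetrically at the start. -/
theorem stmt_16 {V : Type} [Fintype V] [DecidableEq V] (G : FlowGraph V) :
    (∀ (p : List V) (u y : V), G.IsSafe p → p.getLast? = some u →
      G.E u y → (∀ z, G.E u z → G.f u z ≤ G.f u y) →
      ((∃ z, G.E u z ∧ G.IsSafe (p ++ [z])) ↔ G.IsSafe (p ++ [y])) ∧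
      (G.IsSafe (p ++ [y]) ↔ 0 < G.excess p - (G.fout u - G.f u y))) ∧
    (∀ (p : List V) (x z : V), G.IsSafe p → p.head? = some x →
      G.E z x → (∀ z', G.E z' x → G.f z' x ≤ G.f z x) →
      ((∃ z', G.E z' x ∧ G.IsSafe (z' :: p)) ↔ G.IsSafe (z :: p)) ∧
      (G.IsSafe (z :: p) ↔ 0 < G.excess p - (G.fin x - G.f z x))) := by
  constructor
  · intro p u y hp hu hEy hmax
    constructor
    · constructor
      · rintro ⟨z, hEz, hsz⟩
        rw [G.extend_safe_iff hp hu hEz] at hsz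
        rw [G.extend_safe_iff hp hu hEy]
        have := hmax z hEz
        linarith
      · intro h
        exact ⟨y, hEy, h⟩
    · exact G.extend_safe_iff hp hu hEy
  · intro p x z hp hx hEz hmax
    have h2 : 2 ≤ p.length := hp.1.1
    have hc : p.Chain' G.E := hp.1.2
    have hpop : G.op.IsSafe p.reverse := (isSafe_rev_iff G p).mp hp
    have hxop : p.reverse.getLast? = some x := by
      rw [List.getLast?_reverse]
      exact hx
    have hexc : G.op.excess p.reverse = G.excess p :=
      excess_rev G p.length p (le_refl _) h2 hc
    have key : ∀ z', G.E z' x →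
        (G.IsSafe (z' :: p) ↔ 0 < G.excess p - (G.fin x - G.f z' x)) := by
      intro z' hEz'
      have hEop : G.op.E x z' := hEz'
      have h1 := G.op.extend_safe_iff hpop hxop hEop
      have h2' : (z' :: p).reverse = p.reverse ++ [z'] := by simp
      rw [isSafe_rev_iff G (z' :: p), h2', h1, hexc, op_fout, op_f]
    constructor
    · constructor
      · rintro ⟨z', hEz', hsz⟩
        rw [key z' hEz'] at hsz
        rw [key z hEz]
        have := hmax z' hEz'
        linarith
      · intro h
        exact ⟨z, hEz, h⟩
    · exact key z hEz
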